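/- arXiv:1611.04100 — 6 statements merged into one kernel-verified Lean document; each statement's English description precedes it below -/
import Mathlib

section
/- Let (G,L,v) be a reachable triple and let i ∈ {1,2,3,4} be any color. Then 0 ≤ Pr_{G,L}[c(v)=i] ≤ 1/2. -/
/-!
Recolouring `v` injects the proper colourings with `c v = i` into those with `c v ≠ i`: since
`v` has at most `|L v| - 2` neighbours, some colour of `L v` other than `i` is unused on the
neighbourhood of `v`, and the smallest such colour is a valid new colour for `v`. Resetting `v`
to `i` undoes the recolouring, so the map is injective and at most half of all proper colourings
have `c v = i`.
-/

open Finset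

variable {V : Type} [Fintype V] [DecidableEq V]

/-- The set of proper colorings of the list-coloring instance `(G, L)` with colors `Fin 4`. -/
def properColorings (G : SimpleGraph V) [DecidableRel G.Adj]
    (L : V → Finset (Fin 4)) : Finset (V → Fin 4) :=
  Finset.univ.filter
    (fun c => (∀ u, c u ∈ L u) ∧ ∀ u w : V, G.Adj u w → c u ≠ c w)

/-- The marginal probability `Pr_{G,L}[c(v) = i]` under the uniform distribution on
proper colorings of `(G, L)`. -/
noncomputable def margin (G : SimpleGraph V) [DecidableRel G.Adj]
    (L : V → Finset (Fin 4)) (v : V) (i : Fin 4) : ℝ :=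
  (((properColorings G L).filter (fun c => c v = i)).card : ℝ) /
    ((properColorings G L).card : ℝ)

/-- The triple `(G, L, v)` is reachable: every vertex has degree at most `3` and list size
at least its degree plus one, `v` has degree at most `2` and list size at least its degree
plus two. -/
def Reachable4 (G : SimpleGraph V) [DecidableRel G.Adj]
    (L : V → Finset (Fin 4)) (v : V) : Prop :=
  (∀ u : V, G.degree u ≤ 3 ∧ G.degree u + 1 ≤ (L u).card) ∧
    G.degree v ≤ 2 ∧ G.degree v + 2 ≤ (L v).card

theorem Finset.card_filter_le_half {α : Type*} (s : Finset α) (p : α → Prop) [DecidablePred p]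
    (h : #(s.filter p) ≤ #(s.filter fun a => ¬p a)) :
    (#(s.filter p) : ℝ) / #s ≤ 1 / 2 := by
  have hsplit := s.card_filter_add_card_filter_not p
  rcases (#s).eq_zero_or_pos with hs | hs
  · simp [hs]
  · rw [div_le_div_iff₀ (by exact_mod_cast hs) two_pos]
    exact_mod_cast (by omega : #(s.filter p) * 2 ≤ 1 * #s)

theorem Finset.nonempty_sdiff_insert_image {α β : Type*} [DecidableEq β] (s : Finset α)
    (f : α → β) (b : β) {t : Finset β} (h : #s + 2 ≤ #t) :
    (t \ insert b (s.image f)).Nonempty := by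
  have hused : #(insert b (s.image f)) ≤ #s + 1 :=
    (card_insert_le _ _).trans (Nat.add_le_add_right card_image_le 1)
  have := le_card_sdiff (insert b (s.image f)) t
  rw [← card_pos]
  omega

namespace properColorings

variable (G : SimpleGraph V) [DecidableRel G.Adj] (L : V → Finset (Fin 4)) (v : V) (i : Fin 4)

def freshColors (c : V → Fin 4) : Finset (Fin 4) :=
  L v \ insert i ((G.neighborFinset v).image c)

theorem update_mem {c : V → Fin 4} (hc : c ∈ properColorings G L) {a : Fin 4} (haL : a ∈ L v)
    (hfresh : ∀ w, G.Adj v w → c w ≠ a) :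
    Function.update c v a ∈ properColorings G L := by
  simp only [properColorings, mem_filter, mem_univ, true_and] at hc ⊢
  refine ⟨fun u => ?_, fun u w huw => ?_⟩
  · rcases eq_or_ne u v with rfl | hu
    · simpa using haL
    · simpa [hu] using hc.1 u
  · rcases eq_or_ne u v with rfl | hu
    · simpa [(G.ne_of_adj huw).symm] using (hfresh w huw).symm
    rcases eq_or_ne w v with rfl | hw
    · simpa [hu] using hfresh u huw.symm
    · simpa [hu, hw] using hc.2 u w huw

theorem card_filter_eq_le_card_filter_ne (hv : G.degree v + 2 ≤ #(L v)) :
    #((properColorings G L).filter fun c => c v = i) ≤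
      #((properColorings G L).filter fun c => ¬c v = i) := by
  have hfresh c : (freshColors G L v i c).Nonempty :=
    nonempty_sdiff_insert_image _ c i (by rwa [G.card_neighborFinset_eq_degree])
  let recolor c := Function.update c v ((freshColors G L v i c).min' (hfresh c))
  have hrecolor : Set.LeftInvOn (Function.update · v i) recolor
      ((properColorings G L).filter fun c => c v = i) := by
    intro c hc
    rw [mem_coe, mem_filter] at hc
    simp [recolor, ← hc.2]
  refine card_le_card_of_injOn recolor (fun c hc => ?_) hrecolor.injOn
  have hmin := (freshColors G L v i c).min'_mem (hfresh c)
  simp only [freshColors, mem_sdiff, mem_insert, mem_image, SimpleGraph.mem_neighborFinset,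
    not_or, not_exists, not_and] at hmin
  rw [mem_coe, mem_filter] at hc
  simp only [mem_coe, mem_filter, recolor, Function.update_self]
  exact ⟨update_mem G L v hc.1 hmin.1 hmin.2.2, hmin.2.1⟩

end properColorings

/-- If `(G, L, v)` is reachable then `0 ≤ Pr_{G,L}[c(v)=i] ≤ 1/2` for every color `i`. -/
theorem marginal_upper_bound (G : SimpleGraph V) [DecidableRel G.Adj]
    (L : V → Finset (Fin 4)) (v : V) (hreach : Reachable4 G L v) (i : Fin 4) :
    0 ≤ margin G L v i ∧ margin G L v i ≤ 1 / 2 :=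
  ⟨by unfold margin; positivity,
    (properColorings G L).card_filter_le_half _
      (properColorings.card_filter_eq_le_card_filter_ne G L v i hreach.2.2)⟩
end

section
/- Let (G,L,v) be a reachable triple and let i ∈ L(v). If deg_G(v) = 2 then Pr_{G,L}[c(v)=i] ≥ 1/13, and if deg_G(v) ≤ 1 then Pr_{G,L}[c(v)=i] ≥ 1/6. -/
open Finset

variable {V : Type} [Fintype V] [DecidableEq V]

set_option linter.unusedSectionVars false

/-- greedy existence -/
lemma exists_proper (G : SimpleGraph V) [DecidableRel G.Adj] (L : V → Finset (Fin 4))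
    (hL : ∀ u : V, G.degree u + 1 ≤ (L u).card) :
    (properColorings G L).Nonempty := by
  have key : ∀ s : Finset V, ∃ c : V → Fin 4,
      (∀ u ∈ s, c u ∈ L u) ∧ ∀ u ∈ s, ∀ w ∈ s, G.Adj u w → c u ≠ c w := by
    intro s
    induction s using Finset.induction_on with
    | empty => exact ⟨fun _ => 0, by simp, by simp⟩
    | @insert a s ha ih =>
      obtain ⟨c, hc1, hc2⟩ := ih
      have hav : (L a \ ((G.neighborFinset a ∩ s).image c)).Nonempty := by
        rw [← Finset.card_pos]
        have h1 : ((G.neighborFinset a ∩ s).image c).card ≤ G.degree a := by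
          calc ((G.neighborFinset a ∩ s).image c).card ≤ (G.neighborFinset a ∩ s).card :=
                Finset.card_image_le
            _ ≤ (G.neighborFinset a).card := Finset.card_le_card (Finset.inter_subset_left)
            _ = G.degree a := G.card_neighborFinset_eq_degree a
        have := Finset.le_card_sdiff ((G.neighborFinset a ∩ s).image c) (L a)
        have := hL a
        omega
      obtain ⟨x, hx⟩ := hav
      rw [Finset.mem_sdiff] at hx
      refine ⟨Function.update c a x, ?_, ?_⟩
      · intro u hu
        rcases Finset.mem_insert.1 hu with rfl | hu2
        · simp [hx.1]
        · have : u ≠ a := fun h => ha (h ▸ hu2)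
          simp [Function.update_of_ne this, hc1 u hu2]
      · intro u hu w hw hadj
        have hne : u ≠ w := G.ne_of_adj hadj
        rcases Finset.mem_insert.1 hu with rfl | hu2
        case inl =>
          rcases Finset.mem_insert.1 hw with rfl | hw2
          case inl => exact absurd rfl hne
          case inr =>
            have hwa : w ≠ u := hne.symm
            rw [Function.update_self, Function.update_of_ne hwa]
            intro h
            apply hx.2
            rw [h]
            exact Finset.mem_image_of_mem c
              (Finset.mem_inter.2 ⟨(G.mem_neighborFinset _ _).2 hadj, hw2⟩)
        case inr =>
          rcases Finset.mem_insert.1 hw with rfl | hw2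
          case inl =>
            rw [Function.update_of_ne hne, Function.update_self]
            intro h
            apply hx.2
            rw [← h]
            exact Finset.mem_image_of_mem c
              (Finset.mem_inter.2 ⟨(G.mem_neighborFinset _ _).2 hadj.symm, hu2⟩)
          case inr =>
            have h1 : u ≠ a := fun h => ha (h ▸ hu2)
            have h2 : w ≠ a := fun h => ha (h ▸ hw2)
            rw [Function.update_of_ne h1, Function.update_of_ne h2]
            exact hc2 u hu2 w hw2 hadj
  obtain ⟨c, hc1, hc2⟩ := key Finset.univ
  exact ⟨c, Finset.mem_filter.2 ⟨Finset.mem_univ _,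
    fun u => hc1 u (Finset.mem_univ u),
    fun u w h => hc2 u (Finset.mem_univ u) w (Finset.mem_univ w) h⟩⟩

def avail (G : SimpleGraph V) [DecidableRel G.Adj] (L : V → Finset (Fin 4)) (v : V)
    (i : Fin 4) (c : V → Fin 4) (u : V) : Finset (Fin 4) :=
  L u \ insert i (((G.neighborFinset u).erase v).image c)

noncomputable def recolor (G : SimpleGraph V) [DecidableRel G.Adj] (L : V → Finset (Fin 4))
    (v : V) (i : Fin 4) (c : V → Fin 4) : V → Fin 4 := fun w =>
  if w = v then i
  else if G.Adj v w ∧ c w = i then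
    (if h : (avail G L v i c w).Nonempty then (avail G L v i c w).min' h else i)
  else c w

variable {G : SimpleGraph V} [DecidableRel G.Adj] {L : V → Finset (Fin 4)} {v : V} {i : Fin 4}

lemma mem_avail {c : V → Fin 4} {u : V} {x : Fin 4} (hx : x ∈ avail G L v i c u) :
    x ∈ L u ∧ x ≠ i ∧ ∀ w, G.Adj u w → w ≠ v → x ≠ c w := by
  rw [avail, mem_sdiff, mem_insert] at hx
  push_neg at hx
  refine ⟨hx.1, hx.2.1, fun w hadj hne h => ?_⟩
  apply hx.2.2
  rw [h]
  exact mem_image_of_mem c (mem_erase.2 ⟨hne, (G.mem_neighborFinset _ _).2 hadj⟩)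

lemma avail_nonempty (hL : ∀ u : V, G.degree u + 1 ≤ (L u).card)
    (c : V → Fin 4) {u : V} (hu : G.Adj v u) : (avail G L v i c u).Nonempty := by
  rw [← Finset.card_pos]
  have hv : v ∈ G.neighborFinset u := (G.mem_neighborFinset _ _).2 hu.symm
  have h1 : ((G.neighborFinset u).erase v).card = G.degree u - 1 := by
    rw [Finset.card_erase_of_mem hv, G.card_neighborFinset_eq_degree]
  have h2 : (((G.neighborFinset u).erase v).image c).card ≤ G.degree u - 1 :=
    h1 ▸ Finset.card_image_le
  have h3 : (insert i (((G.neighborFinset u).erase v).image c)).card ≤ G.degree u :=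
    le_trans (Finset.card_insert_le _ _) (by
      have : 1 ≤ G.degree u := by
        rw [← G.card_neighborFinset_eq_degree]
        exact Finset.card_pos.2 ⟨v, hv⟩
      omega)
  have h4 := Finset.le_card_sdiff (insert i (((G.neighborFinset u).erase v).image c)) (L u)
  have h5 := hL u
  rw [avail]
  omega

lemma recolor_v (c : V → Fin 4) : recolor G L v i c v = i := by simp [recolor]

lemma recolor_unchanged {c : V → Fin 4} {w : V} (hw : w ≠ v)
    (h : ¬(G.Adj v w ∧ c w = i)) : recolor G L v i c w = c w := by
  simp [recolor, hw, h]

lemma recolor_changed (hL : ∀ u : V, G.degree u + 1 ≤ (L u).card) {c : V → Fin 4} {w : V}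
    (hadj : G.Adj v w) (hcw : c w = i) : recolor G L v i c w ∈ avail G L v i c w := by
  have hw : w ≠ v := fun h => G.ne_of_adj hadj (h.symm)
  have hne := avail_nonempty (i := i) hL c hadj
  rw [recolor, if_neg hw, if_pos (show G.Adj v w ∧ c w = i from ⟨hadj, hcw⟩), dif_pos hne]
  exact Finset.min'_mem _ _

lemma properColorings_spec {c : V → Fin 4} (hc : c ∈ properColorings G L) :
    (∀ u, c u ∈ L u) ∧ ∀ u w : V, G.Adj u w → c u ≠ c w :=
  (Finset.mem_filter.1 hc).2

lemma recolor_mem (hL : ∀ u : V, G.degree u + 1 ≤ (L u).card) (hi : i ∈ L v)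
    {c : V → Fin 4} (hc : c ∈ properColorings G L) :
    recolor G L v i c ∈ properColorings G L := by
  obtain ⟨hmem, hprop⟩ := properColorings_spec hc
  rw [properColorings, Finset.mem_filter]
  refine ⟨Finset.mem_univ _, fun u => ?_, ?_⟩
  · by_cases hu : u = v
    · subst hu; rw [recolor_v]; exact hi
    · by_cases hch : G.Adj v u ∧ c u = i
      · exact (mem_avail (recolor_changed hL hch.1 hch.2)).1
      · rw [recolor_unchanged hu hch]; exact hmem u
  · -- properness
    have Hv : ∀ b, G.Adj v b → recolor G L v i c v ≠ recolor G L v i c b := by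
      intro b hb
      have hbv : b ≠ v := fun h => G.ne_of_adj hb h.symm
      rw [recolor_v]
      by_cases hcb : c b = i
      · exact fun h => (mem_avail (recolor_changed hL hb hcb)).2.1 h.symm
      · rw [recolor_unchanged hbv (fun h => hcb h.2)]
        exact fun h => hcb h.symm
    have H : ∀ a b, G.Adj a b → a ≠ v → b ≠ v →
        recolor G L v i c a ≠ recolor G L v i c b := by
      intro a b hab hav hbv
      by_cases hca : G.Adj v a ∧ c a = i
      · by_cases hcb : G.Adj v b ∧ c b = i
        · exact absurd (hca.2.trans hcb.2.symm) (hprop a b hab)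
        · rw [recolor_unchanged hbv hcb]
          exact (mem_avail (recolor_changed hL hca.1 hca.2)).2.2 b hab hbv
      · by_cases hcb : G.Adj v b ∧ c b = i
        · rw [recolor_unchanged hav hca]
          exact fun h =>
            (mem_avail (recolor_changed hL hcb.1 hcb.2)).2.2 a hab.symm hav h.symm
        · rw [recolor_unchanged hav hca, recolor_unchanged hbv hcb]
          exact hprop a b hab
    intro a b hab
    by_cases hav : a = v
    · subst hav; exact Hv b hab
    · by_cases hbv : b = v
      · subst hbv; exact fun h => Hv a hab.symm h.symm
      · exact H a b hab hav hbv

lemma recolor_eq_self {c : V → Fin 4} (hc : c ∈ properColorings G L) (hcv : c v = i) :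
    recolor G L v i c = c := by
  obtain ⟨_, hprop⟩ := properColorings_spec hc
  funext w
  by_cases hw : w = v
  · subst hw; rw [recolor_v, hcv]
  · have : ¬(G.Adj v w ∧ c w = i) := by
      rintro ⟨hadj, hcw⟩
      exact hprop v w hadj (hcv.trans hcw.symm)
    exact recolor_unchanged hw this

def recon (v : V) (i : Fin 4) (c' : V → Fin 4) (p : Fin 4 × Finset V) : V → Fin 4 :=
  fun w => if w = v then p.1 else if w ∈ p.2 then i else c' w

def Qset (G : SimpleGraph V) [DecidableRel G.Adj] (L : V → Finset (Fin 4)) (v : V)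
    (i : Fin 4) (c' : V → Fin 4) : Finset (Fin 4 × Finset V) :=
  (((L v).erase i) ×ˢ (G.neighborFinset v).powerset).filter
    (fun p => ∀ u ∈ G.neighborFinset v, u ∉ p.2 → p.1 ≠ c' u)

lemma fiber_subset (c' : V → Fin 4) :
    ((properColorings G L).filter (fun c => recolor G L v i c = c')) ⊆
      insert c' ((Qset G L v i c').image (recon v i c')) := by
  intro c hcF
  rw [Finset.mem_filter] at hcF
  obtain ⟨hc, hΦ⟩ := hcF
  obtain ⟨hmem, hprop⟩ := properColorings_spec hc
  by_cases hcc : c = c'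
  · exact Finset.mem_insert.2 (Or.inl hcc)
  refine Finset.mem_insert.2 (Or.inr (Finset.mem_image.2
    ⟨(c v, (G.neighborFinset v).filter (fun u => c u = i)), ?_, ?_⟩))
  · rw [Qset, Finset.mem_filter, Finset.mem_product]
    have hcvne : c v ≠ i := by
      intro h
      exact hcc ((recolor_eq_self hc h).symm.trans hΦ)
    refine ⟨⟨Finset.mem_erase.2 ⟨hcvne, hmem v⟩, Finset.mem_powerset.2 (Finset.filter_subset _ _)⟩,
      ?_⟩
    intro u hu hus
    have hcu : ¬ c u = i := fun h => hus (Finset.mem_filter.2 ⟨hu, h⟩)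
    have huv : u ≠ v := G.ne_of_adj ((G.mem_neighborFinset _ _).1 hu).symm
    have : recolor G L v i c u = c u :=
      recolor_unchanged huv (fun h => hcu h.2)
    rw [← hΦ, this]
    exact hprop v u ((G.mem_neighborFinset _ _).1 hu)
  · funext w
    by_cases hw : w = v
    · subst hw; simp [recon]
    · rw [recon]
      simp only [if_neg hw]
      by_cases hwS : w ∈ (G.neighborFinset v).filter (fun u => c u = i)
      · rw [if_pos hwS]
        exact ((Finset.mem_filter.1 hwS).2).symm
      · rw [if_neg hwS]
        by_cases hadj : G.Adj v w
        · have hcw : ¬ c w = i := fun h =>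
            hwS (Finset.mem_filter.2 ⟨(G.mem_neighborFinset _ _).2 hadj, h⟩)
          rw [← hΦ, recolor_unchanged hw (fun h => hcw h.2)]
        · rw [← hΦ, recolor_unchanged hw (fun h => hadj h.1)]

lemma card_Lv_erase : ((L v).erase i).card ≤ 3 := by
  have h1 : (L v).card ≤ 4 := by
    have := Finset.card_le_univ (L v)
    simpa using this
  have h2 := Finset.card_erase_le (s := L v) (a := i)
  have h3 := Finset.card_erase_of_mem (s := L v) (a := i)
  by_cases hi : i ∈ L v
  · rw [h3 hi]; omega
  · rw [Finset.erase_eq_of_notMem hi]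
    -- then card ≤ 4; need ≤ 3: if i ∉ L v then L v ≠ univ so card ≤ 3
    by_contra h
    push_neg at h
    have : (L v).card = 4 := by omega
    have : L v = Finset.univ := Finset.eq_univ_of_card _ (by simpa using this)
    exact hi (this ▸ Finset.mem_univ i)

lemma card_Qset_le_deg2 (c' : V → Fin 4) (hdeg : G.degree v = 2) :
    (Qset G L v i c').card ≤ 12 := by
  have h := Finset.card_filter_le (((L v).erase i) ×ˢ (G.neighborFinset v).powerset)
    (fun p => ∀ u ∈ G.neighborFinset v, u ∉ p.2 → p.1 ≠ c' u)
  rw [Qset]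
  have hcard : (((L v).erase i) ×ˢ (G.neighborFinset v).powerset).card ≤ 12 := by
    rw [Finset.card_product, Finset.card_powerset, G.card_neighborFinset_eq_degree, hdeg]
    have := card_Lv_erase (L := L) (v := v) (i := i)
    omega
  omega

lemma card_Qset_le_deg1 (hi : i ∈ L v) {c' : V → Fin 4} (hc' : c' ∈ properColorings G L)
    (hv : c' v = i) (hdeg : G.degree v ≤ 1) : (Qset G L v i c').card ≤ 5 := by
  have hd : G.degree v = 0 ∨ G.degree v = 1 := by omega
  have herase : ((L v).erase i).card ≤ 3 := card_Lv_erase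
  rcases hd with h0 | h1
  · have hN : G.neighborFinset v = ∅ := by
      apply Finset.card_eq_zero.1
      rw [G.card_neighborFinset_eq_degree]; exact h0
    calc (Qset G L v i c').card
        ≤ (((L v).erase i) ×ˢ (G.neighborFinset v).powerset).card := Finset.card_filter_le _ _
      _ ≤ 5 := by
          rw [Finset.card_product, hN, Finset.card_powerset]
          simpa using by omega
  · obtain ⟨u0, hu0⟩ := Finset.card_eq_one.1
      (by rw [G.card_neighborFinset_eq_degree]; exact h1)
    have hadj0 : G.Adj v u0 := by
      rw [← G.mem_neighborFinset, hu0]; exact Finset.mem_singleton_self u0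
    have hcu0 : c' u0 ≠ i := by
      intro h
      exact (properColorings_spec hc').2 v u0 hadj0 (hv.trans h.symm)
    have hsub : Qset G L v i c' ⊆
        ((((L v).erase i).erase (c' u0)) ×ˢ ({(∅ : Finset V)} : Finset (Finset V))) ∪
          (((L v).erase i) ×ˢ ({({u0} : Finset V)} : Finset (Finset V))) := by
      intro p hp
      rw [Qset, Finset.mem_filter, Finset.mem_product, hu0] at hp
      obtain ⟨⟨hp1, hp2⟩, hcond⟩ := hp
      rcases Finset.subset_singleton_iff.1 (Finset.mem_powerset.1 hp2) with h | h
      · refine Finset.mem_union_left _ (Finset.mem_product.2 ⟨?_, ?_⟩)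
        · refine Finset.mem_erase.2 ⟨?_, hp1⟩
          exact hcond u0 (Finset.mem_singleton_self u0) (by rw [h]; simp)
        · rw [h]; exact Finset.mem_singleton_self _
      · refine Finset.mem_union_right _ (Finset.mem_product.2 ⟨hp1, ?_⟩)
        rw [h]; exact Finset.mem_singleton_self _
    have hcard := Finset.card_le_card hsub
    have h2 : ((((L v).erase i).erase (c' u0)) ×ˢ
        ({(∅ : Finset V)} : Finset (Finset V))).card = (((L v).erase i).erase (c' u0)).card := by
      rw [Finset.card_product, Finset.card_singleton, mul_one]
    have h3 : ((((L v).erase i)) ×ˢ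
        ({({u0} : Finset V)} : Finset (Finset V))).card = (((L v).erase i)).card := by
      rw [Finset.card_product, Finset.card_singleton, mul_one]
    have hkey : (((L v).erase i).erase (c' u0)).card + (((L v).erase i)).card ≤ 5 := by
      by_cases hmem : c' u0 ∈ (L v).erase i
      · rw [Finset.card_erase_of_mem hmem]
        omega
      · rw [Finset.erase_eq_of_notMem hmem]
        have hle2 : ((L v).erase i).card ≤ 2 := by
          by_contra h
          push_neg at h
          have he3 : ((L v).erase i).card = 3 := by omega
          have hlv : (L v).card = 4 := by
            rw [Finset.card_erase_of_mem hi] at he3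
            omega
          have : L v = Finset.univ := Finset.eq_univ_of_card _ (by simpa using hlv)
          exact hmem (Finset.mem_erase.2 ⟨hcu0, this ▸ Finset.mem_univ _⟩)
        omega
    have := Finset.card_union_le
      ((((L v).erase i).erase (c' u0)) ×ˢ ({(∅ : Finset V)} : Finset (Finset V)))
      (((L v).erase i) ×ˢ ({({u0} : Finset V)} : Finset (Finset V)))
    omega

lemma main_count (hL : ∀ u : V, G.degree u + 1 ≤ (L u).card) (hi : i ∈ L v) {K : ℕ}
    (hK : ∀ c' ∈ (properColorings G L).filter (fun c => c v = i),
      (Qset G L v i c').card ≤ K) :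
    (properColorings G L).card ≤
      (K + 1) * ((properColorings G L).filter (fun c => c v = i)).card := by
  apply Finset.card_le_mul_card_image_of_maps_to (f := recolor G L v i)
  · intro c hc
    exact Finset.mem_filter.2 ⟨recolor_mem hL hi hc, recolor_v c⟩
  · intro c' hc'
    calc ((properColorings G L).filter (fun c => recolor G L v i c = c')).card
        ≤ (insert c' ((Qset G L v i c').image (recon v i c'))).card :=
          Finset.card_le_card (fiber_subset c')
      _ ≤ ((Qset G L v i c').image (recon v i c')).card + 1 := Finset.card_insert_le _ _
      _ ≤ (Qset G L v i c').card + 1 := by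
          have := Finset.card_image_le (s := Qset G L v i c') (f := recon v i c')
          omega
      _ ≤ K + 1 := by have := hK c' hc'; omega

/-- Lower bounds on marginals at a reachable triple: `1/13` when `deg v = 2`
and `1/6` when `deg v ≤ 1`, for colors `i ∈ L(v)`. -/
theorem marginal_lower_bounds (G : SimpleGraph V) [DecidableRel G.Adj]
    (L : V → Finset (Fin 4)) (v : V) (hreach : Reachable4 G L v)
    (i : Fin 4) (hi : i ∈ L v) :
    (G.degree v = 2 → 1 / 13 ≤ margin G L v i) ∧
      (G.degree v ≤ 1 → 1 / 6 ≤ margin G L v i) := by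
  obtain ⟨hall, hdv, hLv⟩ := hreach
  have hL : ∀ u : V, G.degree u + 1 ≤ (L u).card := fun u => (hall u).2
  have hP : (properColorings G L).Nonempty := exists_proper G L hL
  have hPpos : 0 < (properColorings G L).card := Finset.card_pos.2 hP
  have hbound : ∀ K : ℕ, (properColorings G L).card ≤
      K * ((properColorings G L).filter (fun c => c v = i)).card →
      (1 : ℝ) / K ≤ margin G L v i := by
    intro K hK
    have hKpos : 0 < K := by
      rcases Nat.eq_zero_or_pos K with h | h
      · subst h; rw [Nat.zero_mul] at hK; omega
      · exact h
    rw [margin, div_le_div_iff₀ (by exact_mod_cast hKpos) (by exact_mod_cast hPpos)]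
    have : ((properColorings G L).card : ℝ) ≤
        (((properColorings G L).filter (fun c => c v = i)).card : ℝ) * K := by
      exact_mod_cast (hK.trans_eq (Nat.mul_comm _ _))
    linarith
  constructor
  · intro hdeg2
    have hc := main_count hL hi (K := 12) (fun c' _ => card_Qset_le_deg2 c' hdeg2)
    have h13 := hbound 13 (by exact_mod_cast hc)
    norm_num at h13 ⊢
    exact h13
  · intro hdeg1
    have hc := main_count hL hi (K := 5) (fun c' hc' =>
      card_Qset_le_deg1 hi (Finset.mem_filter.1 hc').1 (Finset.mem_filter.1 hc').2 hdeg1)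
    have h6 := hbound 6 (by exact_mod_cast hc)
    norm_num at h6 ⊢
    exact h6
end

section
/- Let (G,L,v) be a reachable triple and let i ∈ {1,2,3,4} be a color such that i ∈ L(u) for some neighbor u of v in G. If deg_G(v) = 2 then Pr_{G,L}[c(v)=i] ≤ 12/25, and if deg_G(v) = 1 then Pr_{G,L}[c(v)=i] ≤ 6/13. -/
open Finset

variable {V : Type} [Fintype V] [DecidableEq V]

/-!
Let `N` count the colorings of `(G, L)` and `R` those of `G - v`. Every `c ∈ R` extends in
`#(L v \ c(N(v))) ≥ #(L v) - deg v ≥ 2` ways, so `N ≥ 2 #R`, and the colorings with `c v = i` are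
the extensions of the `c ∈ R` avoiding `i` on `N(v)`, at most `#{c ∈ R | c u ≠ i}` many.

The key estimate is `#R ≤ 12 #{c ∈ R | c u = i}`: in `G - v` the vertex `u` has degree at most `2`
and its neighbors keep two colors more than their degree once `u` is deleted. Such a vertex can
always be recolored away from `i`, so forcing each neighbour of `u` to avoid `i` loses at most a
factor `2`, and each coloring of `G - v - u` has at most `3` extensions at `u` (`4` if `u` is
isolated there). Hence `24 N_i ≤ 22 #R ≤ 11 N`, and `11/24 ≤ 6/13 ≤ 12/25`.
-/

open Function

namespace SimpleGraph

lemma degree_deleteIncidenceSet_le (G : SimpleGraph V) [DecidableRel G.Adj] (v x : V) :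
    (G.deleteIncidenceSet v).degree x ≤ G.degree x :=
  degree_le_of_le (G.deleteIncidenceSet_le v)

lemma degree_deleteIncidenceSet_add_one_of_adj {G : SimpleGraph V} [DecidableRel G.Adj]
    {v u : V} (h : G.Adj v u) : (G.deleteIncidenceSet v).degree u + 1 = G.degree u := by
  have hnb : (G.deleteIncidenceSet v).neighborFinset u = (G.neighborFinset u).erase v := by
    ext x
    simp [deleteIncidenceSet_adj, h.ne', and_comm]
  rw [← card_neighborFinset_eq_degree, ← card_neighborFinset_eq_degree, hnb,
    card_erase_add_one ((G.mem_neighborFinset u v).2 h.symm)]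

end SimpleGraph

section Colorings

variable {G : SimpleGraph V} [DecidableRel G.Adj] {L : V → Finset (Fin 4)}

lemma mem_properColorings {c : V → Fin 4} :
    c ∈ properColorings G L ↔ (∀ u, c u ∈ L u) ∧ ∀ u w, G.Adj u w → c u ≠ c w := by
  simp [properColorings]

lemma apply_eq_of_mem_properColorings_update {v : V} {i : Fin 4} {c : V → Fin 4}
    (hc : c ∈ properColorings G (update L v {i})) : c v = i := by
  simpa using (mem_properColorings.1 hc).1 v

/-- `(G.deleteIncidenceSet v, update L v {i})` stands for the instance `G - v`: the vertex `v`
stays, isolated, with its color pinned to `i`. -/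
lemma update_mem_properColorings_deleteIncidenceSet {c : V → Fin 4}
    (hc : c ∈ properColorings G L) (v : V) (i : Fin 4) :
    update c v i ∈ properColorings (G.deleteIncidenceSet v) (update L v {i}) := by
  simp only [mem_properColorings, SimpleGraph.deleteIncidenceSet_adj] at hc ⊢
  refine ⟨fun u => ?_, fun a b ⟨hab, ha, hb⟩ => by simpa [ha, hb] using hc.2 a b hab⟩
  by_cases hu : u = v
  · simp [hu]
  · simpa [hu] using hc.1 u

lemma update_mem_properColorings_iff {v : V} {i k : Fin 4} {c : V → Fin 4}
    (hc : c ∈ properColorings (G.deleteIncidenceSet v) (update L v {i})) :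
    update c v k ∈ properColorings G L ↔
      k ∈ L v ∧ ∀ x ∈ G.neighborFinset v, c x ≠ k := by
  simp only [mem_properColorings, SimpleGraph.deleteIncidenceSet_adj,
    SimpleGraph.mem_neighborFinset] at hc ⊢
  constructor
  · rintro ⟨hL, hadj⟩
    exact ⟨by simpa using hL v, fun x hx => by simpa [hx.ne'] using (hadj v x hx).symm⟩
  · rintro ⟨hk, hnb⟩
    refine ⟨fun u => ?_, fun a b hab => ?_⟩
    · by_cases hu : u = v
      · simpa [hu] using hk
      · simpa [hu] using hc.1 u
    · by_cases ha : a = v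
      · subst ha; simpa [hab.ne'] using (hnb b hab).symm
      by_cases hb : b = v
      · subst hb; simpa [ha] using hnb a hab.symm
      simpa [ha, hb] using hc.2 a b ⟨hab, ha, hb⟩

lemma update_mem_properColorings {v : V} {c : V → Fin 4} {k : Fin 4}
    (hc : c ∈ properColorings G L) (hk : k ∈ L v)
    (hnb : ∀ x ∈ G.neighborFinset v, c x ≠ k) :
    update c v k ∈ properColorings G L := by
  have hext := update_mem_properColorings_iff (k := k)
    (update_mem_properColorings_deleteIncidenceSet hc v k)
  rw [update_idem] at hext
  refine hext.2 ⟨hk, fun x hx => ?_⟩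
  simpa [(G.ne_of_adj ((G.mem_neighborFinset v x).1 hx)).symm] using hnb x hx

lemma card_filter_apply_eq_le_card_filter_apply_ne {w : V} (hw : G.degree w + 2 ≤ #(L w))
    (P : (V → Fin 4) → Prop) [DecidablePred P] (hP : ∀ c k, P c → P (update c w k))
    (i : Fin 4) :
    #{c ∈ properColorings G L | P c ∧ c w = i} ≤
      #{c ∈ properColorings G L | P c ∧ c w ≠ i} := by
  have hfree (c : V → Fin 4) : (L w \ insert i ((G.neighborFinset w).image c)).Nonempty := by
    have := le_card_sdiff (insert i ((G.neighborFinset w).image c)) (L w)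
    have := card_insert_le i ((G.neighborFinset w).image c)
    have := G.card_neighborFinset_eq_degree w ▸ card_image_le (s := G.neighborFinset w)
      (f := c)
    rw [← card_pos]
    omega
  choose k hk using hfree
  refine card_le_card_of_injOn (fun c => update c w (k c)) (fun c hc => ?_)
    (fun c₁ hc₁ c₂ hc₂ h => ?_)
  · simp only [coe_filter, Set.mem_ofPred_eq] at hc ⊢
    obtain ⟨hkL, hki, hkc⟩ :
        k c ∈ L w ∧ k c ≠ i ∧ ∀ x ∈ G.neighborFinset w, c x ≠ k c := by
      simpa [not_or, eq_comm] using hk c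
    exact ⟨update_mem_properColorings hc.1 hkL hkc, hP _ _ hc.2.1, by simpa using hki⟩
  · simp only [coe_filter, Set.mem_ofPred_eq] at hc₁ hc₂
    calc c₁ = update (update c₁ w (k c₁)) w i := by simp [← hc₁.2.2]
      _ = update (update c₂ w (k c₂)) w i := congrArg (update · w i) h
      _ = c₂ := by simp [← hc₂.2.2]

lemma card_properColorings_le_two_pow_mul (S : Finset V)
    (hS : ∀ x ∈ S, G.degree x + 2 ≤ #(L x)) (i : Fin 4) :
    #(properColorings G L) ≤ 2 ^ #S * #{c ∈ properColorings G L | ∀ x ∈ S, c x ≠ i} := by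
  induction S using Finset.induction_on with
  | empty => simp
  | insert a S haS ih =>
    set P : (V → Fin 4) → Prop := fun c => ∀ x ∈ S, c x ≠ i
    have hP (c k) (hc : P c) : P (update c a k) := fun x hx => by
      simpa [ne_of_mem_of_not_mem hx haS] using hc x hx
    have hhalf :=
      card_filter_apply_eq_le_card_filter_apply_ne (hS a (mem_insert_self a S)) P hP i
    have hsplit := card_filter_add_card_filter_not (s := {c ∈ properColorings G L | P c})
      (p := fun c => c a = i)
    simp only [filter_filter, ← ne_eq] at hsplit
    have hins : {c ∈ properColorings G L | ∀ x ∈ insert a S, c x ≠ i}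
        = {c ∈ properColorings G L | P c ∧ c a ≠ i} := by
      ext c; simp [P, and_comm]
    calc #(properColorings G L) ≤ 2 ^ #S * #{c ∈ properColorings G L | P c} :=
          ih fun x hx => hS x (mem_insert_of_mem hx)
      _ ≤ 2 ^ #S * (2 * #{c ∈ properColorings G L | P c ∧ c a ≠ i}) :=
          Nat.mul_le_mul_left _ (by omega)
      _ = 2 ^ #(insert a S) * #{c ∈ properColorings G L | ∀ x ∈ insert a S, c x ≠ i} := by
          rw [hins, card_insert_of_notMem haS, pow_succ, mul_assoc]

lemma filter_properColorings_apply_eq {v : V} {i : Fin 4} (hi : i ∈ L v) :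
    {c ∈ properColorings G L | c v = i} =
      {c ∈ properColorings (G.deleteIncidenceSet v) (update L v {i}) |
        ∀ x ∈ G.neighborFinset v, c x ≠ i} := by
  ext c
  simp only [mem_filter]
  constructor
  · rintro ⟨hc, rfl⟩
    have hR := update_mem_properColorings_deleteIncidenceSet hc v (c v)
    rw [update_eq_self] at hR
    exact ⟨hR, ((update_mem_properColorings_iff hR).1 (by rwa [update_eq_self])).2⟩
  · rintro ⟨hc, hnb⟩
    have hcv := apply_eq_of_mem_properColorings_update hc
    refine ⟨?_, hcv⟩
    simpa [← hcv] using (update_mem_properColorings_iff (k := i) hc).2 ⟨hi, hnb⟩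

lemma card_properColorings_eq_sum (v : V) (i : Fin 4) :
    #(properColorings G L) = ∑ c ∈ properColorings (G.deleteIncidenceSet v) (update L v {i}),
      #(L v \ (G.neighborFinset v).image c) := by
  rw [card_eq_sum_card_fiberwise
    fun d hd => update_mem_properColorings_deleteIncidenceSet (mem_coe.1 hd) v i]
  refine sum_congr rfl fun c hc => ?_
  rw [← card_image_of_injective _ (update_injective c v)]
  congr 1
  ext d
  simp only [mem_filter, mem_image, mem_sdiff]
  constructor
  · rintro ⟨hd, rfl⟩
    have hdv := (update_mem_properColorings_iff (k := d v) hc).1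
      (by rwa [update_idem, update_eq_self])
    exact ⟨d v, ⟨hdv.1, fun ⟨x, hx, hxd⟩ => hdv.2 x hx hxd⟩, by simp⟩
  · rintro ⟨k, ⟨hk, hnb⟩, rfl⟩
    refine ⟨(update_mem_properColorings_iff hc).2
      ⟨hk, fun x hx hxk => hnb ⟨x, hx, hxk⟩⟩, ?_⟩
    rw [update_idem, ← apply_eq_of_mem_properColorings_update hc, update_eq_self]

lemma card_properColorings_le_twelve_mul {v : V} (hv : G.degree v ≤ 2)
    (hnb : ∀ u, G.Adj v u → G.degree u + 1 ≤ #(L u)) {i : Fin 4} (hi : i ∈ L v) :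
    #(properColorings G L) ≤ 12 * #{c ∈ properColorings G L | c v = i} := by
  set R := properColorings (G.deleteIncidenceSet v) (update L v {i})
  have hR : #R ≤ 2 ^ G.degree v * #{c ∈ properColorings G L | c v = i} := by
    rw [filter_properColorings_apply_eq hi, ← G.card_neighborFinset_eq_degree]
    refine card_properColorings_le_two_pow_mul _ (fun x hx => ?_) i
    have hvx := (G.mem_neighborFinset v x).1 hx
    rw [update_of_ne hvx.ne']
    have := SimpleGraph.degree_deleteIncidenceSet_add_one_of_adj hvx
    have := hnb x hvx
    omega
  have hN (m : ℕ) (hm : ∀ c : V → Fin 4, #(L v \ (G.neighborFinset v).image c) ≤ m) :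
      #(properColorings G L) ≤ m * #R := by
    rw [card_properColorings_eq_sum v i, mul_comm, ← smul_eq_mul]
    exact sum_le_card_nsmul _ _ _ fun c _ => hm c
  rcases (G.degree v).eq_zero_or_pos with h0 | hpos
  · have := hN 4 fun c => (card_le_univ _).trans (by simp)
    rw [h0] at hR
    omega
  · obtain ⟨u, hu⟩ : (G.neighborFinset v).Nonempty := by
      rwa [← card_pos, G.card_neighborFinset_eq_degree]
    have h3 := hN 3 fun c => calc
      #(L v \ (G.neighborFinset v).image c) ≤ #(univ.erase (c u)) :=
        card_le_card fun k hk => mem_erase.2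
          ⟨fun h => (mem_sdiff.1 hk).2 (mem_image.2 ⟨u, hu, h.symm⟩), mem_univ k⟩
      _ = 3 := by simp
    have : 2 ^ G.degree v ≤ 4 := by interval_cases G.degree v <;> norm_num
    nlinarith

lemma twenty_four_mul_card_filter_le_eleven_mul {v : V} {i : Fin 4} (hreach : Reachable4 G L v)
    (hnb : ∃ u, G.Adj v u ∧ i ∈ L u) :
    24 * #{c ∈ properColorings G L | c v = i} ≤ 11 * #(properColorings G L) := by
  obtain ⟨hall, -, hLv⟩ := hreach
  obtain ⟨u, hvu, hiu⟩ := hnb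
  by_cases hi : i ∈ L v
  swap
  · have : {c ∈ properColorings G L | c v = i} = ∅ :=
      filter_eq_empty_iff.2 fun c hc hcv => hi (hcv ▸ (mem_properColorings.1 hc).1 v)
    simp [this]
  set R := properColorings (G.deleteIncidenceSet v) (update L v {i})
  have hdeg := SimpleGraph.degree_deleteIncidenceSet_add_one_of_adj hvu
  have hRu : #R ≤ 12 * #{c ∈ R | c u = i} := by
    refine card_properColorings_le_twelve_mul ?_ (fun x hux => ?_)
      (by rwa [update_of_ne hvu.ne'])
    · have := (hall u).1
      omega
    · rw [update_of_ne (SimpleGraph.deleteIncidenceSet_adj.1 hux).2.2]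
      have := SimpleGraph.degree_deleteIncidenceSet_le G v x
      have := (hall x).2
      omega
  have hsplit := card_filter_add_card_filter_not (s := R) (p := fun c => c u = i)
  have hNi : #{c ∈ properColorings G L | c v = i} ≤ #{c ∈ R | ¬ c u = i} := by
    rw [filter_properColorings_apply_eq hi]
    exact card_le_card <|
      monotone_filter_right _ fun c _ h => h u ((G.mem_neighborFinset v u).2 hvu)
  have hN : 2 * #R ≤ #(properColorings G L) := by
    rw [card_properColorings_eq_sum (G := G) (L := L) v i, mul_comm, ← smul_eq_mul]
    refine card_nsmul_le_sum _ _ _ fun c _ => ?_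
    have := le_card_sdiff ((G.neighborFinset v).image c) (L v)
    have := G.card_neighborFinset_eq_degree v ▸ card_image_le (s := G.neighborFinset v)
      (f := c)
    omega
  omega

lemma margin_le_of_mul_le {v : V} {i : Fin 4} {p q : ℕ} (hq : 0 < q)
    (h : q * #{c ∈ properColorings G L | c v = i} ≤ p * #(properColorings G L)) :
    margin G L v i ≤ p / q := by
  rcases (#(properColorings G L)).eq_zero_or_pos with h0 | hpos
  · simp [margin, h0]
    positivity
  · rw [margin, div_le_div_iff₀ (by exact_mod_cast hpos) (by exact_mod_cast hq)]
    rw [mul_comm _ (q : ℝ)]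
    exact_mod_cast h

end Colorings

/-- Upper bounds on marginals at a reachable triple when the color `i` appears in the
list of some neighbor of `v`: `12/25` when `deg v = 2` and `6/13` when `deg v = 1`. -/
theorem marginal_upper_bounds_neighbor (G : SimpleGraph V) [DecidableRel G.Adj]
    (L : V → Finset (Fin 4)) (v : V) (hreach : Reachable4 G L v)
    (i : Fin 4) (hnb : ∃ u : V, G.Adj v u ∧ i ∈ L u) :
    (G.degree v = 2 → margin G L v i ≤ 12 / 25) ∧
      (G.degree v = 1 → margin G L v i ≤ 6 / 13) := by
  have h : margin G L v i ≤ (11 : ℕ) / (24 : ℕ) :=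
    margin_le_of_mul_le (by norm_num) (twenty_four_mul_card_filter_le_eleven_mul hreach hnb)
  exact ⟨fun _ => h.trans (by norm_num), fun _ => h.trans (by norm_num)⟩
end

section
/- Let (G,L,v) be a reachable triple with deg_G(v) = 2 and let i ∈ {1,2,3,4} be any color. Then either the vertex v and its two neighbors form a triangle in G, or Pr_{G,L}[c(v)=i] ≤ 13/27. -/
open Finset

variable {V : Type} [Fintype V] [DecidableEq V]

/-- Core finite bound: for any available sets `A₁ A₂` of size at least `2` and a color `i`,
among triples `(x,a,b)` with `a ∈ A₁`, `b ∈ A₂`, `x ≠ a`, `x ≠ b`, the fraction with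
`x = i` is at most `4/9`. -/
lemma core_triple_bound : ∀ (A₁ A₂ : Finset (Fin 4)) (i : Fin 4), 2 ≤ A₁.card → 2 ≤ A₂.card →
    9 * ((Finset.univ.filter (fun p : Fin 4 × Fin 4 × Fin 4 =>
        (p.2.1 ∈ A₁ ∧ p.2.2 ∈ A₂ ∧ p.1 ≠ p.2.1 ∧ p.1 ≠ p.2.2) ∧ p.1 = i)).card)
    ≤ 4 * ((Finset.univ.filter (fun p : Fin 4 × Fin 4 × Fin 4 =>
        p.2.1 ∈ A₁ ∧ p.2.2 ∈ A₂ ∧ p.1 ≠ p.2.1 ∧ p.1 ≠ p.2.2)).card) := by decide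

/-- For a reachable triple with `deg v = 2` and any color `i`, either `v` and its two
neighbors form a triangle in `G`, or `Pr_{G,L}[c(v)=i] ≤ 13/27`. -/
theorem marginal_triangle_or_bound (G : SimpleGraph V) [DecidableRel G.Adj]
    (L : V → Finset (Fin 4)) (v : V) (hreach : Reachable4 G L v)
    (hdeg : G.degree v = 2) (i : Fin 4) :
    (∃ u₁ u₂ : V, u₁ ≠ u₂ ∧ G.Adj v u₁ ∧ G.Adj v u₂ ∧ G.Adj u₁ u₂) ∨
      margin G L v i ≤ 13 / 27 := by
  classical
  have hcard : (G.neighborFinset v).card = 2 := hdeg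
  obtain ⟨u₁, u₂, hne, hN⟩ := Finset.card_eq_two.mp hcard
  have hnbr : ∀ w, G.Adj v w ↔ (w = u₁ ∨ w = u₂) := by
    intro w
    rw [← SimpleGraph.mem_neighborFinset, hN]
    simp
  have h1 : G.Adj v u₁ := (hnbr u₁).2 (Or.inl rfl)
  have h2 : G.Adj v u₂ := (hnbr u₂).2 (Or.inr rfl)
  by_cases hadj : G.Adj u₁ u₂
  · exact Or.inl ⟨u₁, u₂, hne, h1, h2, hadj⟩
  right
  have hv1 : v ≠ u₁ := G.ne_of_adj h1
  have hv2 : v ≠ u₂ := G.ne_of_adj h2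
  -- the full list at v
  have hLv : L v = Finset.univ := by
    apply Finset.eq_univ_of_card
    have h4 : 4 ≤ (L v).card := by
      have := hreach.2.2; omega
    have h4' : (L v).card ≤ 4 := by
      simpa using Finset.card_le_univ (L v)
    simp only [Fintype.card_fin]
    omega
  set P : Finset (V → Fin 4) := properColorings G L with hP
  set num : Finset (V → Fin 4) := P.filter (fun c => c v = i) with hnum
  have hmemP : ∀ c, c ∈ P ↔ (∀ u, c u ∈ L u) ∧ ∀ u w : V, G.Adj u w → c u ≠ c w := by
    intro c; simp [hP, properColorings]
  set k : (V → Fin 4) → (V → Fin 4) :=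
    fun c w => if w = v ∨ w = u₁ ∨ w = u₂ then 0 else c w with hk
  set t : Finset (V → Fin 4) := P.image k with ht
  have hmain : 9 * num.card ≤ 4 * P.card := by
    have hmapsP : ∀ c ∈ P, k c ∈ t := fun c hc => Finset.mem_image_of_mem k hc
    have hmapsnum : ∀ c ∈ num, k c ∈ t := fun c hc =>
      hmapsP c (Finset.mem_filter.mp hc).1
    rw [Finset.card_eq_sum_card_fiberwise hmapsnum,
        Finset.card_eq_sum_card_fiberwise hmapsP, Finset.mul_sum, Finset.mul_sum]
    apply Finset.sum_le_sum
    intro σ hσ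
    obtain ⟨c₀, hc₀P, hkc₀⟩ := Finset.mem_image.mp hσ
    obtain ⟨hc₀L, hc₀E⟩ := (hmemP c₀).mp hc₀P
    -- available color sets at u₁ and u₂
    set A₁ : Finset (Fin 4) := (L u₁) \ ((G.neighborFinset u₁).erase v).image σ with hA₁def
    set A₂ : Finset (Fin 4) := (L u₂) \ ((G.neighborFinset u₂).erase v).image σ with hA₂def
    have hAcard : ∀ (u : V), G.Adj v u →
        2 ≤ ((L u) \ ((G.neighborFinset u).erase v).image σ).card := by
      intro u hu
      have hvmem : v ∈ G.neighborFinset u := by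
        rw [SimpleGraph.mem_neighborFinset]; exact hu.symm
      have he : ((G.neighborFinset u).erase v).card = G.degree u - 1 := by
        rw [Finset.card_erase_of_mem hvmem]; rfl
      have himg : (((G.neighborFinset u).erase v).image σ).card ≤ G.degree u - 1 := by
        rw [← he]; exact Finset.card_image_le
      have hdu : 1 ≤ G.degree u := by
        have : 0 < (G.neighborFinset u).card := Finset.card_pos.mpr ⟨v, hvmem⟩
        exact this
      have hLu : G.degree u + 1 ≤ (L u).card := (hreach.1 u).2
      have hsd := Finset.le_card_sdiff (((G.neighborFinset u).erase v).image σ) (L u)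
      omega
    have h2A₁ : 2 ≤ A₁.card := hAcard u₁ h1
    have h2A₂ : 2 ≤ A₂.card := hAcard u₂ h2
    -- the two fibers
    set Pσ : Finset (V → Fin 4) := P.filter (fun c => k c = σ) with hPσ
    set S : Finset (Fin 4 × Fin 4 × Fin 4) := Finset.univ.filter
        (fun p => p.2.1 ∈ A₁ ∧ p.2.2 ∈ A₂ ∧ p.1 ≠ p.2.1 ∧ p.1 ≠ p.2.2) with hS
    set Si : Finset (Fin 4 × Fin 4 × Fin 4) := Finset.univ.filter
        (fun p => (p.2.1 ∈ A₁ ∧ p.2.2 ∈ A₂ ∧ p.1 ≠ p.2.1 ∧ p.1 ≠ p.2.2) ∧ p.1 = i) with hSi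
    -- inverse map
    set invF : (Fin 4 × Fin 4 × Fin 4) → (V → Fin 4) :=
      fun p w => if w = v then p.1 else if w = u₁ then p.2.1 else if w = u₂ then p.2.2
        else σ w with hinvF
    have hσ0 : ∀ w, (w = v ∨ w = u₁ ∨ w = u₂) → σ w = 0 := by
      intro w hw
      rw [← hkc₀]
      simp only [hk, if_pos hw]
    have hσother : ∀ w, w ≠ v → w ≠ u₁ → w ≠ u₂ → σ w = c₀ w := by
      intro w h₁ h₂ h₃
      rw [← hkc₀]
      simp only [hk]
      rw [if_neg (by tauto)]
    have hiv : ∀ p, invF p v = p.1 := by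
      intro p; simp [hinvF]
    have hia : ∀ p, invF p u₁ = p.2.1 := by
      intro p
      simp [hinvF, (Ne.symm hv1 : u₁ ≠ v)]
    have hib : ∀ p, invF p u₂ = p.2.2 := by
      intro p
      simp [hinvF, (Ne.symm hv2 : u₂ ≠ v), (hne.symm : u₂ ≠ u₁)]
    have hiother : ∀ p w, w ≠ v → w ≠ u₁ → w ≠ u₂ → invF p w = σ w := by
      intro p w h₁ h₂ h₃
      simp only [hinvF]
      rw [if_neg h₁, if_neg h₂, if_neg h₃]
    -- forward membership
    have fwd_mem : ∀ c ∈ Pσ, (c v, c u₁, c u₂) ∈ S := by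
      intro c hc
      obtain ⟨hcP, hkc⟩ := Finset.mem_filter.mp hc
      obtain ⟨hcL, hcE⟩ := (hmemP c).mp hcP
      have hcother : ∀ w, w ≠ v → w ≠ u₁ → w ≠ u₂ → σ w = c w := by
        intro w h₁ h₂ h₃
        rw [← hkc]
        simp only [hk]
        rw [if_neg (by tauto)]
      have hu₁A : c u₁ ∈ A₁ := by
        rw [hA₁def, Finset.mem_sdiff]
        refine ⟨hcL u₁, ?_⟩
        intro hmem
        obtain ⟨w, hw, hwe⟩ := Finset.mem_image.mp hmem
        have hwv : w ≠ v := Finset.ne_of_mem_erase hw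
        have hwadj : G.Adj u₁ w := by
          have := Finset.mem_of_mem_erase hw
          rwa [SimpleGraph.mem_neighborFinset] at this
        have hwu₁ : w ≠ u₁ := fun h => G.irrefl (h ▸ hwadj)
        have hwu₂ : w ≠ u₂ := fun h => hadj (h ▸ hwadj)
        rw [hcother w hwv hwu₁ hwu₂] at hwe
        exact hcE u₁ w hwadj hwe.symm
      have hu₂A : c u₂ ∈ A₂ := by
        rw [hA₂def, Finset.mem_sdiff]
        refine ⟨hcL u₂, ?_⟩
        intro hmem
        obtain ⟨w, hw, hwe⟩ := Finset.mem_image.mp hmem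
        have hwv : w ≠ v := Finset.ne_of_mem_erase hw
        have hwadj : G.Adj u₂ w := by
          have := Finset.mem_of_mem_erase hw
          rwa [SimpleGraph.mem_neighborFinset] at this
        have hwu₂ : w ≠ u₂ := fun h => G.irrefl (h ▸ hwadj)
        have hwu₁ : w ≠ u₁ := fun h => hadj (h ▸ hwadj).symm
        rw [hcother w hwv hwu₁ hwu₂] at hwe
        exact hcE u₂ w hwadj hwe.symm
      rw [hS, Finset.mem_filter]
      exact ⟨Finset.mem_univ _, hu₁A, hu₂A, hcE v u₁ h1, hcE v u₂ h2⟩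
    -- backward membership
    have inv_mem : ∀ p ∈ S, invF p ∈ Pσ := by
      intro p hp
      rw [hS, Finset.mem_filter] at hp
      obtain ⟨-, ha, hb, hxa, hxb⟩ := hp
      have haL : p.2.1 ∈ L u₁ := (Finset.mem_sdiff.mp ha).1
      have hbL : p.2.2 ∈ L u₂ := (Finset.mem_sdiff.mp hb).1
      have haI : p.2.1 ∉ ((G.neighborFinset u₁).erase v).image σ :=
        (Finset.mem_sdiff.mp ha).2
      have hbI : p.2.2 ∉ ((G.neighborFinset u₂).erase v).image σ :=
        (Finset.mem_sdiff.mp hb).2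
      -- the key edge fact: invF p is proper
      have hedge : ∀ w w' : V, G.Adj w w' → invF p w ≠ invF p w' := by
        intro w w' hww'
        by_cases hw1 : w = v
        · rw [hw1] at hww' ⊢
          rcases (hnbr w').mp hww' with h | h
          · rw [h, hiv, hia]; exact hxa
          · rw [h, hiv, hib]; exact hxb
        by_cases hw2 : w = u₁
        · rw [hw2] at hww' ⊢
          by_cases hw'1 : w' = v
          · rw [hw'1, hiv, hia]; exact fun h => hxa h.symm
          by_cases hw'2 : w' = u₁
          · rw [hw'2] at hww'; exact absurd hww' (G.irrefl)
          by_cases hw'3 : w' = u₂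
          · rw [hw'3] at hww'; exact absurd hww' hadj
          · rw [hia, hiother p w' hw'1 hw'2 hw'3]
            intro h
            apply haI
            apply Finset.mem_image.mpr
            refine ⟨w', ?_, h.symm⟩
            refine Finset.mem_erase.mpr ⟨hw'1, ?_⟩
            rw [SimpleGraph.mem_neighborFinset]
            exact hww'
        by_cases hw3 : w = u₂
        · rw [hw3] at hww' ⊢
          by_cases hw'1 : w' = v
          · rw [hw'1, hiv, hib]; exact fun h => hxb h.symm
          by_cases hw'2 : w' = u₁
          · rw [hw'2] at hww'; exact absurd hww'.symm hadj
          by_cases hw'3 : w' = u₂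
          · rw [hw'3] at hww'; exact absurd hww' (G.irrefl)
          · rw [hib, hiother p w' hw'1 hw'2 hw'3]
            intro h
            apply hbI
            apply Finset.mem_image.mpr
            refine ⟨w', ?_, h.symm⟩
            refine Finset.mem_erase.mpr ⟨hw'1, ?_⟩
            rw [SimpleGraph.mem_neighborFinset]
            exact hww'
        -- w is another vertex
        by_cases hw'1 : w' = v
        · rw [hw'1] at hww'
          rcases (hnbr w).mp hww'.symm with h | h
          · exact absurd h hw2
          · exact absurd h hw3
        by_cases hw'2 : w' = u₁
        · rw [hw'2] at hww' ⊢
          rw [hiother p w hw1 hw2 hw3, hia]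
          intro h
          apply haI
          refine Finset.mem_image.mpr ⟨w, Finset.mem_erase.mpr ⟨hw1, ?_⟩, h⟩
          rw [SimpleGraph.mem_neighborFinset]
          exact hww'.symm
        by_cases hw'3 : w' = u₂
        · rw [hw'3] at hww' ⊢
          rw [hiother p w hw1 hw2 hw3, hib]
          intro h
          apply hbI
          refine Finset.mem_image.mpr ⟨w, Finset.mem_erase.mpr ⟨hw1, ?_⟩, h⟩
          rw [SimpleGraph.mem_neighborFinset]
          exact hww'.symm
        · rw [hiother p w hw1 hw2 hw3, hiother p w' hw'1 hw'2 hw'3,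
            hσother w hw1 hw2 hw3, hσother w' hw'1 hw'2 hw'3]
          exact hc₀E w w' hww'
      have hmem : invF p ∈ P := by
        rw [hmemP]
        refine ⟨?_, hedge⟩
        intro w
        by_cases hw1 : w = v
        · rw [hw1, hiv, hLv]; exact Finset.mem_univ _
        by_cases hw2 : w = u₁
        · rw [hw2, hia]; exact haL
        by_cases hw3 : w = u₂
        · rw [hw3, hib]; exact hbL
        · rw [hiother p w hw1 hw2 hw3, hσother w hw1 hw2 hw3]; exact hc₀L w
      rw [hPσ, Finset.mem_filter]
      refine ⟨hmem, ?_⟩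
      funext w
      simp only [hk]
      by_cases hw : w = v ∨ w = u₁ ∨ w = u₂
      · rw [if_pos hw, hσ0 w hw]
      · push_neg at hw
        rw [if_neg (by tauto), hiother p w hw.1 hw.2.1 hw.2.2]
    -- left inverse
    have linv : ∀ c ∈ Pσ, invF (c v, c u₁, c u₂) = c := by
      intro c hc
      obtain ⟨hcP, hkc⟩ := Finset.mem_filter.mp hc
      funext w
      by_cases hw1 : w = v
      · rw [hw1, hiv]
      by_cases hw2 : w = u₁
      · rw [hw2, hia]
      by_cases hw3 : w = u₂
      · rw [hw3, hib]
      · rw [hiother _ w hw1 hw2 hw3, ← hkc]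
        simp only [hk]
        rw [if_neg (by tauto)]
    -- right inverse
    have rinv : ∀ p ∈ S, (invF p v, invF p u₁, invF p u₂) = p := by
      intro p _
      rw [hiv, hia, hib]
    have e1 : Pσ.card = S.card :=
      Finset.card_bij' (fun c _ => (c v, c u₁, c u₂)) (fun p _ => invF p)
        fwd_mem inv_mem linv rinv
    have e2 : (num.filter (fun c => k c = σ)).card = Si.card := by
      have hnumσ : num.filter (fun c => k c = σ) = Pσ.filter (fun c => c v = i) := by
        rw [hnum, hPσ, Finset.filter_filter, Finset.filter_filter]
        apply Finset.filter_congr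
        intro c _; tauto
      rw [hnumσ]
      apply Finset.card_bij' (fun c _ => (c v, c u₁, c u₂)) (fun p _ => invF p)
      · intro c hc
        obtain ⟨hcPσ, hci⟩ := Finset.mem_filter.mp hc
        have := fwd_mem c hcPσ
        rw [hS, Finset.mem_filter] at this
        rw [hSi, Finset.mem_filter]
        exact ⟨Finset.mem_univ _, this.2, hci⟩
      · intro p hp
        rw [hSi, Finset.mem_filter] at hp
        obtain ⟨hu, hpred, hpi⟩ := hp
        have hpS : p ∈ S := by rw [hS, Finset.mem_filter]; exact ⟨hu, hpred⟩
        rw [Finset.mem_filter]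
        refine ⟨inv_mem p hpS, ?_⟩
        rw [hiv, hpi]
      · intro c hc
        exact linv c (Finset.mem_filter.mp hc).1
      · intro p hp
        rw [hSi, Finset.mem_filter] at hp
        have hpS : p ∈ S := by rw [hS, Finset.mem_filter]; exact ⟨hp.1, hp.2.1⟩
        exact rinv p hpS
    have hPfilter : (P.filter (fun c => k c = σ)).card = S.card := by
      rw [← e1]
    rw [e2, hPfilter]
    exact core_triple_bound A₁ A₂ i h2A₁ h2A₂
  -- conclude the real inequality
  unfold margin
  rcases Nat.eq_zero_or_pos P.card with hP0 | hPpos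
  · have hnum0 : num.card = 0 := by
      have : num.card ≤ P.card := Finset.card_le_card (Finset.filter_subset _ _)
      omega
    rw [← hP, ← hnum, hnum0, hP0]
    norm_num
  · rw [← hP, ← hnum]
    rw [div_le_div_iff₀ (by exact_mod_cast hPpos) (by norm_num)]
    have h27 : 27 * num.card ≤ 13 * P.card := by omega
    have hc : (27 : ℝ) * (num.card : ℝ) ≤ 13 * (P.card : ℝ) := by exact_mod_cast h27
    linarith
end

section
/- Let (G,L,v) be a reachable triple, let i ∈ L(v), and suppose Pr_{G,L}[c(v)=i] = 1/2. Then one of the following three structural cases holds: (1) deg_G(v) = 0 and |L(v)| = 2 (so exactly two colors other than i are missing from L(v)); (2) deg_G(v) = 1 with neighbor u, i ∉ L(u), and there exists a color j ≠ i with j ∉ L(u) ∪ L(v); (3) deg_G(v) = 2 with neighbors u_1, u_2, the vertices v, u_1, u_2 form a triangle in G, and i ∉ L(u_1) ∪ L(u_2). -/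
open Finset

variable {V : Type} [Fintype V] [DecidableEq V]

lemma greedy_extend (G : SimpleGraph V) [DecidableRel G.Adj] (L : V → Finset (Fin 4))
    (hL : ∀ u, G.degree u + 1 ≤ (L u).card) :
    ∀ (n : ℕ) (S : Finset V), Sᶜ.card ≤ n → ∀ (c : V → Fin 4),
      (∀ u ∈ S, c u ∈ L u) →
      (∀ u ∈ S, ∀ w ∈ S, G.Adj u w → c u ≠ c w) →
      ∃ d : V → Fin 4, (∀ u ∈ S, d u = c u) ∧
        (∀ u, d u ∈ L u) ∧ (∀ u w, G.Adj u w → d u ≠ d w) := by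
  intro n
  induction n with
  | zero =>
    intro S hS c h1 h2
    have hSu : S = univ := by
      have : Sᶜ = ∅ := Finset.card_eq_zero.mp (Nat.le_zero.mp hS)
      simpa [Finset.compl_eq_empty_iff] using this
    subst hSu
    exact ⟨c, fun u _ => rfl, fun u => h1 u (mem_univ u),
      fun u w h => h2 u (mem_univ u) w (mem_univ w) h⟩
  | succ n ih =>
    intro S hS c h1 h2
    by_cases hS0 : Sᶜ.card ≤ n
    · exact ih S hS0 c h1 h2
    · have hne : Sᶜ.Nonempty := by
        rw [← Finset.card_pos]; omega
      obtain ⟨w, hw⟩ := hne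
      have hwS : w ∉ S := Finset.mem_compl.mp hw
      set F : Finset (Fin 4) := ((G.neighborFinset w) ∩ S).image c with hF
      have hFcard : F.card ≤ G.degree w := by
        calc F.card ≤ ((G.neighborFinset w) ∩ S).card := Finset.card_image_le
          _ ≤ (G.neighborFinset w).card := Finset.card_le_card inter_subset_left
          _ = G.degree w := rfl
      have hav : (L w \ F).Nonempty := by
        rw [← Finset.card_pos]
        have h3 := Finset.le_card_sdiff F (L w)
        have := hL w
        omega
      obtain ⟨j, hj⟩ := hav
      have hjL : j ∈ L w := (Finset.mem_sdiff.mp hj).1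
      have hjF : j ∉ F := (Finset.mem_sdiff.mp hj).2
      have key : ∀ u ∈ S, G.Adj w u → c u ≠ j := by
        intro u hu hadj heq
        exact hjF (Finset.mem_image.mpr ⟨u, Finset.mem_inter.mpr
          ⟨(G.mem_neighborFinset w u).mpr hadj, hu⟩, heq⟩)
      set c' : V → Fin 4 := Function.update c w j with hc'
      have hcard' : (insert w S)ᶜ.card ≤ n := by
        rw [Finset.compl_insert, Finset.card_erase_of_mem hw]
        omega
      have h1' : ∀ u ∈ insert w S, c' u ∈ L u := by
        intro u hu
        rcases Finset.mem_insert.mp hu with h | h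
        · subst h; simpa [hc'] using hjL
        · have : u ≠ w := fun e => hwS (e ▸ h)
          simpa [hc', Function.update_of_ne this] using h1 u h
      have h2' : ∀ u ∈ insert w S, ∀ x ∈ insert w S, G.Adj u x → c' u ≠ c' x := by
        intro u hu x hx hadj
        rcases Finset.mem_insert.mp hu with h | h <;>
          rcases Finset.mem_insert.mp hx with h' | h'
        · subst h; subst h'; exact absurd hadj (G.irrefl)
        · have hx' : x ≠ w := fun e => hwS (e ▸ h')
          rw [h]
          simp only [hc', Function.update_self, Function.update_of_ne hx']
          exact fun e => key x h' (h ▸ hadj) e.symm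
        · have hu' : u ≠ w := fun e => hwS (e ▸ h)
          rw [h']
          simp only [hc', Function.update_self, Function.update_of_ne hu']
          exact key u h (h' ▸ hadj).symm
        · have hx' : x ≠ w := fun e => hwS (e ▸ h')
          have hu' : u ≠ w := fun e => hwS (e ▸ h)
          simpa [hc', Function.update_of_ne hx', Function.update_of_ne hu'] using
            h2 u h x h' hadj
      obtain ⟨d, hd1, hd2, hd3⟩ := ih (insert w S) hcard' c' h1' h2'
      refine ⟨d, fun u hu => ?_, hd2, hd3⟩
      have : u ≠ w := fun e => hwS (e ▸ hu)
      rw [hd1 u (Finset.mem_insert_of_mem hu), hc', Function.update_of_ne this]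

lemma fiber_card (G : SimpleGraph V) [DecidableRel G.Adj] (L : V → Finset (Fin 4)) (v : V)
    (pred : Fin 4 → Prop) [DecidablePred pred] (c₀ : V → Fin 4)
    (hc₀ : c₀ ∈ properColorings G L) :
    (((properColorings G L).filter (fun c => pred (c v))).filter
        (fun c => Function.update c v 0 = Function.update c₀ v 0)).card =
      (((L v).filter (fun j => ∀ u, G.Adj v u → c₀ u ≠ j)).filter pred).card := by
  classical
  have hc₀' : (∀ u, c₀ u ∈ L u) ∧ ∀ u w, G.Adj u w → c₀ u ≠ c₀ w := by
    simpa [properColorings] using hc₀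
  apply Finset.card_bij' (fun c _ => c v) (fun j _ => Function.update c₀ v j)
  · -- hi
    intro c hc
    simp only [Finset.mem_filter] at hc ⊢
    obtain ⟨⟨hcP, hcpred⟩, hck⟩ := hc
    have hcP' : (∀ u, c u ∈ L u) ∧ ∀ u w, G.Adj u w → c u ≠ c w := by
      simpa [properColorings] using hcP
    have hagree : ∀ u, u ≠ v → c u = c₀ u := by
      intro u hu
      have := congrFun hck u
      simpa [Function.update_of_ne hu] using this
    refine ⟨⟨hcP'.1 v, fun u hadj heq => ?_⟩, hcpred⟩
    exact hcP'.2 v u hadj ((hagree u hadj.ne').trans heq).symm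
  · -- hj
    intro j hj
    simp only [Finset.mem_filter] at hj
    obtain ⟨⟨hjL, havoid⟩, hjpred⟩ := hj
    simp only [Finset.mem_filter]
    refine ⟨⟨?_, by simpa using hjpred⟩, by rw [Function.update_idem]⟩
    simp only [properColorings, Finset.mem_filter, Finset.mem_univ, true_and]
    constructor
    · intro u
      by_cases hu : u = v
      · subst hu; simpa using hjL
      · simpa [Function.update_of_ne hu] using hc₀'.1 u
    · intro u w hadj
      by_cases hu : u = v
      · rw [hu] at hadj ⊢
        have hw : w ≠ v := hadj.ne'
        simp only [Function.update_self, Function.update_of_ne hw]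
        exact fun e => havoid w hadj e.symm
      · by_cases hw : w = v
        · rw [hw] at hadj ⊢
          simp only [Function.update_self, Function.update_of_ne hu]
          exact havoid u hadj.symm
        · simpa [Function.update_of_ne hu, Function.update_of_ne hw] using
            hc₀'.2 u w hadj
  · -- left inverse
    intro c hc
    simp only [Finset.mem_filter] at hc
    have hagree : ∀ u, u ≠ v → c u = c₀ u := by
      intro u hu
      have := congrFun hc.2 u
      simpa [Function.update_of_ne hu] using this
    funext u
    by_cases hu : u = v
    · subst hu; simp
    · simp [Function.update_of_ne hu, (hagree u hu).symm]
  · -- right inverse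
    intro j hj
    simp

/-- Structural characterization of the boundary case `Pr_{G,L}[c(v)=i] = 1/2` at a
reachable triple with `i ∈ L(v)`. -/
theorem marginal_half_structure (G : SimpleGraph V) [DecidableRel G.Adj]
    (L : V → Finset (Fin 4)) (v : V) (hreach : Reachable4 G L v)
    (i : Fin 4) (hi : i ∈ L v) (hhalf : margin G L v i = 1 / 2) :
    (G.degree v = 0 ∧ (L v).card = 2) ∨
      (G.degree v = 1 ∧ ∃ u : V, G.Adj v u ∧ i ∉ L u ∧
        ∃ j : Fin 4, j ≠ i ∧ j ∉ L u ∧ j ∉ L v) ∨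
      (G.degree v = 2 ∧ ∃ u₁ u₂ : V, u₁ ≠ u₂ ∧ G.Adj v u₁ ∧ G.Adj v u₂ ∧
        G.Adj u₁ u₂ ∧ i ∉ L u₁ ∧ i ∉ L u₂) := by
  classical
  set P := properColorings G L with hPdef
  have hL1 : ∀ u, G.degree u + 1 ≤ (L u).card := fun u => (hreach.1 u).2
  have hext : ∀ (S : Finset V) (c : V → Fin 4),
      (∀ u ∈ S, c u ∈ L u) → (∀ u ∈ S, ∀ w ∈ S, G.Adj u w → c u ≠ c w) →
      ∃ d, (∀ u ∈ S, d u = c u) ∧ d ∈ P := by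
    intro S c hone htwo
    obtain ⟨d, hd1, hd2, hd3⟩ := greedy_extend G L hL1 (Sᶜ.card) S le_rfl c hone htwo
    refine ⟨d, hd1, ?_⟩
    simp only [hPdef, properColorings, Finset.mem_filter, Finset.mem_univ, true_and]
    exact ⟨hd2, hd3⟩
  have hP0 : P.Nonempty := by
    obtain ⟨d, _, hd⟩ := hext ∅ (fun _ => 0) (by simp) (by simp)
    exact ⟨d, hd⟩
  set A : (V → Fin 4) → Finset (Fin 4) :=
    fun c => (L v).filter (fun j => ∀ u, G.Adj v u → c u ≠ j) with hAdef
  have hA2 : ∀ c ∈ P, 2 ≤ (A c).card := by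
    intro c hc
    have hsub : L v \ ((G.neighborFinset v).image c) ⊆ A c := by
      intro j hj
      rw [Finset.mem_sdiff] at hj
      refine Finset.mem_filter.mpr ⟨hj.1, fun u hadj heq => hj.2 ?_⟩
      exact Finset.mem_image.mpr ⟨u, (G.mem_neighborFinset v u).mpr hadj, heq⟩
    have hle1 := Finset.le_card_sdiff ((G.neighborFinset v).image c) (L v)
    have hle2 : ((G.neighborFinset v).image c).card ≤ G.degree v :=
      Finset.card_image_le
    have hle3 := Finset.card_le_card hsub
    have hle4 := hreach.2.2
    omega
  set Pi := P.filter (fun c => c v = i) with hPidef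
  have hPcard : P.card = 2 * Pi.card := by
    have hPpos : (0:ℝ) < (P.card : ℝ) := by
      exact_mod_cast Finset.card_pos.mpr hP0
    rw [margin, ← hPdef] at hhalf
    rw [div_eq_div_iff hPpos.ne' (by norm_num : (2:ℝ) ≠ 0)] at hhalf
    have hnat : (P.filter (fun c => c v = i)).card * 2 = 1 * P.card := by
      exact_mod_cast hhalf
    rw [one_mul] at hnat
    rw [hPidef, ← hnat]
    exact Nat.mul_comm _ _
  -- fiberwise decomposition
  set K : (V → Fin 4) → (V → Fin 4) := fun c => Function.update c v 0 with hKdef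
  have hsumP : P.card = ∑ σ ∈ P.image K, (P.filter (fun c => K c = σ)).card :=
    Finset.card_eq_sum_card_image K P
  have hsumPi : Pi.card = ∑ σ ∈ P.image K, (Pi.filter (fun c => K c = σ)).card :=
    Finset.card_eq_sum_card_fiberwise (fun c hc =>
      Finset.mem_image_of_mem _ (Finset.mem_of_mem_filter c hc))
  have hfib : ∀ σ ∈ P.image K,
      ∃ c₀, c₀ ∈ P ∧ K c₀ = σ ∧
        (P.filter (fun c => K c = σ)).card = (A c₀).card ∧
        (Pi.filter (fun c => K c = σ)).card
          = (if i ∈ A c₀ then 1 else 0) := by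
    intro σ hσ
    obtain ⟨c₀, hc₀, hσeq⟩ := Finset.mem_image.mp hσ
    refine ⟨c₀, hc₀, hσeq, ?_, ?_⟩
    · rw [← hσeq]
      have h := fiber_card G L v (fun _ => True) c₀ hc₀
      simpa [hPdef, hAdef, hKdef, Finset.filter_true] using h
    · rw [← hσeq]
      have h := fiber_card G L v (fun j => j = i) c₀ hc₀
      rw [Finset.filter_eq'] at h
      by_cases hiA : i ∈ A c₀
      · rw [if_pos (by simpa [hAdef] using hiA)] at h
        rw [if_pos hiA]
        simpa [hPdef, hPidef, hKdef, hAdef] using h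
      · rw [if_neg (by simpa [hAdef] using hiA)] at h
        rw [if_neg hiA]
        simpa [hPdef, hPidef, hKdef, hAdef] using h
  have hterm : ∀ σ ∈ P.image K,
      (P.filter (fun c => K c = σ)).card = 2 * (Pi.filter (fun c => K c = σ)).card := by
    have hle : ∀ σ ∈ P.image K,
        2 * (Pi.filter (fun c => K c = σ)).card ≤ (P.filter (fun c => K c = σ)).card := by
      intro σ hσ
      obtain ⟨c₀, hc₀P, _, h1, h2⟩ := hfib σ hσ
      have := hA2 c₀ hc₀P
      rw [h1, h2]
      split <;> omega
    have hsum_eq : ∑ σ ∈ P.image K, 2 * (Pi.filter (fun c => K c = σ)).card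
        = ∑ σ ∈ P.image K, (P.filter (fun c => K c = σ)).card := by
      rw [← Finset.mul_sum, ← hsumPi, ← hsumP, hPcard]
    intro σ hσ
    exact (((Finset.sum_eq_sum_iff_of_le hle).mp hsum_eq) σ hσ).symm
  have hAeq : ∀ c c' : V → Fin 4, K c = K c' → A c = A c' := by
    intro c c' h
    have hag : ∀ u, u ≠ v → c u = c' u := by
      intro u hu
      have := congrFun h u
      simpa [hKdef, Function.update_of_ne hu] using this
    simp only [hAdef]
    refine Finset.filter_congr fun j _ => ?_
    constructor
    · intro h' u hadj
      rw [← hag u hadj.ne']; exact h' u hadj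
    · intro h' u hadj
      rw [hag u hadj.ne']; exact h' u hadj
  have Hkey : ∀ c ∈ P, i ∈ A c ∧ (A c).card = 2 := by
    intro c hc
    have hσ : K c ∈ P.image K := Finset.mem_image_of_mem _ hc
    obtain ⟨c₀, hc₀P, hσeq, h1, h2⟩ := hfib _ hσ
    have hAe : A c = A c₀ := hAeq c c₀ hσeq.symm
    have ht := hterm _ hσ
    rw [h1, h2] at ht
    have h22 := hA2 c₀ hc₀P
    by_cases hiA : i ∈ A c₀
    · rw [if_pos hiA] at ht
      exact ⟨hAe ▸ hiA, by rw [hAe]; omega⟩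
    · rw [if_neg hiA] at ht
      omega
  have Hne : ∀ c ∈ P, ∀ u, G.Adj v u → c u ≠ i := by
    intro c hc u hadj
    have h := (Hkey c hc).1
    simp only [hAdef, Finset.mem_filter] at h
    exact h.2 u hadj
  have hone : ∀ (u : V) (j : Fin 4), j ∈ L u → ∃ d ∈ P, d u = j := by
    intro u j hj
    obtain ⟨d, hd1, hd2⟩ := hext {u} (fun _ => j) (by simpa using hj)
      (by
        intro a ha b hb hadj
        rw [Finset.mem_singleton] at ha hb
        rw [ha, hb] at hadj
        exact (G.irrefl hadj).elim)
    exact ⟨d, hd2, hd1 u (Finset.mem_singleton_self u)⟩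
  have hnoti : ∀ u, G.Adj v u → i ∉ L u := by
    intro u hadj hiu
    obtain ⟨d, hd, hdu⟩ := hone u i hiu
    exact Hne d hd u hadj hdu
  have hdeg : G.degree v = 0 ∨ G.degree v = 1 ∨ G.degree v = 2 := by
    have := hreach.2.1; omega
  rcases hdeg with h0 | h1 | h2
  · -- degree 0
    left
    refine ⟨h0, ?_⟩
    have hnone : ∀ u, ¬ G.Adj v u := by
      intro u hadj
      have hm : u ∈ G.neighborFinset v := (G.mem_neighborFinset v u).mpr hadj
      have := Finset.card_pos.mpr ⟨u, hm⟩
      have hd0 : (G.neighborFinset v).card = 0 := h0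
      omega
    obtain ⟨c, hc⟩ := hP0
    have h2 := (Hkey c hc).2
    have hAc : A c = L v := by
      simp only [hAdef]
      exact Finset.filter_true_of_mem fun j _ u hadj => (hnone u hadj).elim
    rw [hAc] at h2
    exact h2
  · -- degree 1
    obtain ⟨u, hu⟩ := Finset.card_eq_one.mp (show (G.neighborFinset v).card = 1 from h1)
    have hadj : G.Adj v u := (G.mem_neighborFinset v u).mp (by rw [hu]; simp)
    have hadj_iff : ∀ w, G.Adj v w ↔ w = u := by
      intro w
      rw [← G.mem_neighborFinset, hu, Finset.mem_singleton]
    have hAc : ∀ c : V → Fin 4, A c = (L v).erase (c u) := by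
      intro c
      simp only [hAdef]
      ext j
      simp only [Finset.mem_filter, Finset.mem_erase]
      constructor
      · intro ⟨hjL, h⟩
        exact ⟨fun e => h u hadj e.symm, hjL⟩
      · intro ⟨hne, hjL⟩
        refine ⟨hjL, fun w hadj' => ?_⟩
        rw [(hadj_iff w).mp hadj']
        exact fun e => hne e.symm
    have hLv3 : (L v).card = 3 := by
      obtain ⟨c, hc⟩ := hP0
      have hk := (Hkey c hc).2
      rw [hAc c] at hk
      have h4 : 3 ≤ (L v).card := by
        have := hreach.2.2; omega
      by_cases hcu : c u ∈ L v
      · have := Finset.card_erase_of_mem hcu; omega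
      · rw [Finset.erase_eq_of_notMem hcu] at hk; omega
    have hachieve : ∀ j ∈ L u, j ∈ L v := by
      intro j hj
      obtain ⟨d, hd, hdu⟩ := hone u j hj
      have hk := (Hkey d hd).2
      rw [hAc d, hdu] at hk
      by_contra hjL
      rw [Finset.erase_eq_of_notMem hjL] at hk
      omega
    obtain ⟨j₀, hj₀⟩ : ∃ j₀, j₀ ∉ L v := by
      by_contra h
      push_neg at h
      have : L v = univ := Finset.eq_univ_of_forall h
      rw [this, Finset.card_univ] at hLv3
      simp at hLv3
    right; left
    exact ⟨h1, u, hadj, hnoti u hadj, j₀, fun e => hj₀ (e ▸ hi),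
      fun h => hj₀ (hachieve j₀ h), hj₀⟩
  · -- degree 2
    obtain ⟨u₁, u₂, hne, hu⟩ :=
      Finset.card_eq_two.mp (show (G.neighborFinset v).card = 2 from h2)
    have hadj₁ : G.Adj v u₁ := (G.mem_neighborFinset v u₁).mp (by rw [hu]; simp)
    have hadj₂ : G.Adj v u₂ := (G.mem_neighborFinset v u₂).mp (by rw [hu]; simp)
    have hadj_iff : ∀ w, G.Adj v w ↔ w = u₁ ∨ w = u₂ := by
      intro w
      rw [← G.mem_neighborFinset, hu, Finset.mem_insert, Finset.mem_singleton]
    have hi₁ : i ∉ L u₁ := hnoti u₁ hadj₁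
    have hi₂ : i ∉ L u₂ := hnoti u₂ hadj₂
    have hLvu : L v = univ := by
      apply Finset.eq_univ_of_card
      have h4 : 4 ≤ (L v).card := by have := hreach.2.2; omega
      have h5 := Finset.card_le_univ (L v)
      simp only [Finset.card_univ, Fintype.card_fin] at h5 ⊢
      omega
    have hadj₁₂ : G.Adj u₁ u₂ := by
      by_contra hnadj
      have hs₁ : L u₁ ⊆ univ.erase i := fun j hj =>
        Finset.mem_erase.mpr ⟨fun e => hi₁ (e ▸ hj), Finset.mem_univ j⟩
      have hs₂ : L u₂ ⊆ univ.erase i := fun j hj =>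
        Finset.mem_erase.mpr ⟨fun e => hi₂ (e ▸ hj), Finset.mem_univ j⟩
      have hd₁ : 1 ≤ G.degree u₁ :=
        Finset.card_pos.mpr ⟨v, (G.mem_neighborFinset u₁ v).mpr hadj₁.symm⟩
      have hd₂ : 1 ≤ G.degree u₂ :=
        Finset.card_pos.mpr ⟨v, (G.mem_neighborFinset u₂ v).mpr hadj₂.symm⟩
      have hc₁ : 2 ≤ (L u₁).card := by have := (hreach.1 u₁).2; omega
      have hc₂ : 2 ≤ (L u₂).card := by have := (hreach.1 u₂).2; omega
      have hcap : (L u₁ ∩ L u₂).Nonempty := by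
        rw [← Finset.card_pos]
        have h5 : (L u₁ ∪ L u₂).card ≤ (univ.erase i).card :=
          Finset.card_le_card (Finset.union_subset hs₁ hs₂)
        have h6 : ((univ : Finset (Fin 4)).erase i).card = 3 := by
          rw [Finset.card_erase_of_mem (Finset.mem_univ i), Finset.card_univ]
          simp
        have h7 := Finset.card_union_add_card_inter (L u₁) (L u₂)
        omega
      obtain ⟨j, hj⟩ := hcap
      rw [Finset.mem_inter] at hj
      obtain ⟨d, hd1, hd2⟩ := hext {u₁, u₂} (fun _ => j)
        (by
          intro a ha
          rcases Finset.mem_insert.mp ha with h | h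
          · rw [h]; exact hj.1
          · rw [Finset.mem_singleton.mp h]; exact hj.2)
        (by
          intro a ha b hb hadj'
          exfalso
          have ha' : a = u₁ ∨ a = u₂ := by simpa using ha
          have hb' : b = u₁ ∨ b = u₂ := by simpa using hb
          rcases ha' with h | h <;> rcases hb' with h' | h' <;>
            rw [h, h'] at hadj'
          · exact G.irrefl hadj'
          · exact hnadj hadj'
          · exact hnadj hadj'.symm
          · exact G.irrefl hadj')
      have hdu₁ : d u₁ = j := hd1 u₁ (by simp)
      have hdu₂ : d u₂ = j := hd1 u₂ (by simp)
      have hk := (Hkey d hd2).2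
      have hAd : A d = univ.erase j := by
        simp only [hAdef, hLvu]
        ext j'
        simp only [Finset.mem_filter, Finset.mem_erase, Finset.mem_univ, true_and,
          and_true]
        constructor
        · intro h'
          have hx := h' u₁ hadj₁
          rw [hdu₁] at hx
          exact hx.symm
        · intro hne' w hadj'
          rcases (hadj_iff w).mp hadj' with h | h
          · rw [h, hdu₁]; exact hne'.symm
          · rw [h, hdu₂]; exact hne'.symm
      rw [hAd] at hk
      rw [Finset.card_erase_of_mem (Finset.mem_univ j), Finset.card_univ] at hk
      simp at hk
    right; right
    exact ⟨h2, u₁, u₂, hne, hadj₁, hadj₂, hadj₁₂, hi₁, hi₂⟩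
end

section
/- Let M = 3/2 − √2. For real numbers f_2, f_3, y_2, y_3 set Â = 1 + (1 − f_2)(1 − y_2) + 2(1 − f_3)(1 − y_3) and define α̂(f_2,f_3,y_2,y_3) = (2/(Â − 2)) · [ (1 − f_2)·y_2(1/2 − y_2) + 2M·f_2·(1 − Â) + 2(1 − f_3)·y_3(1/2 − y_3) + 4M·f_2·(1 − y_3) ]. Then for all f_2, f_3 ∈ [0, 1/2] and y_2, y_3 ∈ [0, 6/13] satisfying f_2 + 2f_3 = 1 and 1/13 ≤ f_2 ≤ 1/2, one has α̂(f_2,f_3,y_2,y_3) ≤ 9231/10000. -/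
/-- `M = 3/2 − √2`, the maximum of `x(1/2 − x)/(1 − x)` over `[0, 1/2]`. -/
noncomputable def Mconst : ℝ := 3 / 2 - Real.sqrt 2

/-- The symmetrized contraction rate `α̂(f₂, f₃, y₂, y₃)` for the case `d₁ = 1`,
`1 ∉ L(v₁)`. -/
noncomputable def alphaHat (f2 f3 y2 y3 : ℝ) : ℝ :=
  let A := 1 + (1 - f2) * (1 - y2) + 2 * ((1 - f3) * (1 - y3))
  (2 / (A - 2)) *
    ((1 - f2) * (y2 * (1 / 2 - y2)) + 2 * Mconst * f2 * (1 - A) +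
      2 * (1 - f3) * (y3 * (1 / 2 - y3)) + 4 * Mconst * f2 * (1 - y3))

set_option maxHeartbeats 1000000

/-- For `f₂, f₃ ∈ [0, 1/2]`, `y₂, y₃ ∈ [0, 6/13]` with `f₂ + 2f₃ = 1` and
`1/13 ≤ f₂ ≤ 1/2`, one has `α̂(f₂, f₃, y₂, y₃) ≤ 9231/10000`. -/
theorem alphaHat_le (f2 f3 y2 y3 : ℝ)
    (hf2 : f2 ∈ Set.Icc (0 : ℝ) (1 / 2)) (hf3 : f3 ∈ Set.Icc (0 : ℝ) (1 / 2))
    (hy2 : y2 ∈ Set.Icc (0 : ℝ) (6 / 13)) (hy3 : y3 ∈ Set.Icc (0 : ℝ) (6 / 13))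
    (hsum : f2 + 2 * f3 = 1) (hf2' : 1 / 13 ≤ f2) :
    alphaHat f2 f3 y2 y3 ≤ 9231 / 10000 := by
  obtain ⟨hf20, hf21⟩ := hf2
  obtain ⟨hy20, hy21⟩ := hy2
  obtain ⟨hy30, hy31⟩ := hy3
  have hf3eq : f3 = (1 - f2) / 2 := by linarith
  subst hf3eq
  clear hf3 hsum
  set s : ℝ := Real.sqrt 2 with hsdef
  have hs2 : s ^ 2 = 2 := Real.sq_sqrt (by norm_num)
  have hs0 : 0 ≤ s := Real.sqrt_nonneg 2
  have hsub : s ≤ 17 / 12 := by nlinarith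
  have hslb : 441 / 312 ≤ s := by nlinarith
  have hM : (0 : ℝ) ≤ 3 / 2 - s := by linarith
  unfold alphaHat Mconst
  rw [← hsdef]
  dsimp only
  have hD : 0 < 1 + (1 - f2) * (1 - y2) + 2 * ((1 - (1 - f2) / 2) * (1 - y3)) - 2 := by
    nlinarith [mul_nonneg (by linarith : (0:ℝ) ≤ 1 - f2) (by linarith : (0:ℝ) ≤ 6/13 - y2),
      mul_nonneg (by linarith : (0:ℝ) ≤ 1 + f2) (by linarith : (0:ℝ) ≤ 6/13 - y3)]
  rw [div_mul_eq_mul_div, div_le_iff₀ hD]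
  -- nonnegativity of the two square-completion terms
  have hP2 : (0:ℝ) ≤ 9231/10000 + 1/13 - 2 * y2 := by linarith
  have hP3 : (0:ℝ) ≤ 9231/10000 + 1/13 - 2 * y3 := by linarith
  have T1 : (0:ℝ) ≤ (1 - f2) * (6/13 - y2) * (9231/10000 + 1/13 - 2 * y2) :=
    mul_nonneg (mul_nonneg (by linarith) (by linarith)) hP2
  have T2 : (0:ℝ) ≤ (1 + f2) * (6/13 - y3) * (9231/10000 + 1/13 - 2 * y3) :=
    mul_nonneg (mul_nonneg (by linarith) (by linarith)) hP3
  rcases le_total y2 y3 with hcase | hcase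
  · -- M-term is nonpositive
    have T3 : (0:ℝ) ≤ (3/2 - s) * f2 * (1 - f2) * (y3 - y2) :=
      mul_nonneg (mul_nonneg (mul_nonneg hM (by linarith)) (by linarith)) (by linarith)
    nlinarith [T1, T2, T3]
  · -- y3 ≤ y2 : bound the M-term by the y3 slack term
    have key1 : f2 * (1 - f2) ≤ (3 - 2 * s) * (1 + f2) := by
      nlinarith [sq_nonneg (f2 - (s - 1))]
    have key2 : 4 * (3/2 - s) * (3 - 2 * s) ≤ 9231/10000 + 1/13 - 2 * y3 := by
      nlinarith [hs2, hslb, hy31]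
    have A1 : (0:ℝ) ≤ (4 * (3/2 - s)) * ((3 - 2*s) * (1 + f2) - f2 * (1 - f2)) * (y2 - y3) :=
      mul_nonneg (mul_nonneg (by linarith) (by linarith)) (by linarith)
    have A2 : (0:ℝ) ≤ (9231/10000 + 1/13 - 2 * y3 - 4 * (3/2 - s) * (3 - 2*s)) *
        ((1 + f2) * (y2 - y3)) :=
      mul_nonneg (by linarith) (mul_nonneg (by linarith) (by linarith))
    have A3 : (0:ℝ) ≤ (9231/10000 + 1/13 - 2 * y3) * ((1 + f2) * (6/13 - y2)) :=
      mul_nonneg hP3 (mul_nonneg (by linarith) (by linarith))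
    have h4 : 4 * (3/2 - s) * f2 * (1 - f2) * (y2 - y3) ≤
        (9231/10000 + 1/13 - 2 * y3) * ((1 + f2) * (6/13 - y3)) := by
      nlinarith [A1, A2, A3]
    nlinarith [T1, h4]
end
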